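/- If ρ^B(0) = ρ^B(1) exactly (perfect concealment) for the reduced states of pure bipartite states |Ψ(0)⟩, |Ψ(1)⟩ ∈ H_A ⊗ H_B, then there exists a unitary U_A on H_A with (U_A ⊗ I)|Ψ(1)⟩ = |Ψ(0)⟩, and hence F(ρ^B_final(0), ρ'^B_final(0)) = 1 for all unitary continuations: Alice's cheating succeeds with certainty. -/

import Mathlib

/-!
Write `Ψ b` as its coefficient matrix `M_b : Matrix A B ℂ`. Bob's reduced state is the transposed
Gram matrix `(M_bᴴ M_b)ᵀ`, so perfect concealment says that `M_false` and `M_true` have the same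
Gram matrix. Then `M_true x ↦ M_false x` is a well-defined isometry on the range of `M_true`, and
extending it to all of `ℂ^A` gives a unitary `U` with `U M_true = M_false`, i.e.
`(U ⊗ I) Ψ(true) = Ψ(false)`. After that the two final states of Bob coincide, and the fidelity of
a density matrix with itself is `tr √(ρ²) = tr ρ = 1`.
-/

open scoped BigOperators ComplexOrder

noncomputable section

namespace QBC

/-- Total matrix square root (junk value `0` off the PSD cone). -/
def msqrt {n : Type*} [Fintype n] [DecidableEq n] (A : Matrix n n ℂ) : Matrix n n ℂ :=
  open scoped Classical in
  if h : A.PosSemidef then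
    h.1.eigenvectorUnitary.1 * Matrix.diagonal ((↑) ∘ (√·) ∘ h.1.eigenvalues) *
      (star h.1.eigenvectorUnitary : Matrix n n ℂ)
  else 0

/-- Quantum fidelity `F(ρ,σ) = tr √(√ρ σ √ρ)`. -/
def fidelity {n : Type*} [Fintype n] [DecidableEq n] (ρ σ : Matrix n n ℂ) : ℝ :=
  ((msqrt (msqrt ρ * σ * msqrt ρ)).trace).re

/-- Density operator: positive semidefinite with unit trace. -/
def IsDensity {n : Type*} [Fintype n] [DecidableEq n] (ρ : Matrix n n ℂ) : Prop :=
  ρ.PosSemidef ∧ ρ.trace = 1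

/-- Inner product `⟨ψ|φ⟩`. -/
def ip {α : Type*} [Fintype α] (ψ φ : α → ℂ) : ℂ := ∑ x, star (ψ x) * φ x

/-- Rank-one projection `|ψ⟩⟨ψ|`. -/
def proj {α : Type*} [Fintype α] (ψ : α → ℂ) : Matrix α α ℂ :=
  Matrix.of fun x y => ψ x * star (ψ y)

/-- Partial trace over the first tensor factor. -/
def ptraceA {A B : Type*} [Fintype A] (M : Matrix (A × B) (A × B) ℂ) : Matrix B B ℂ :=
  Matrix.of fun i j => ∑ a, M (a, i) (a, j)

/-- `(U ⊗ I_B)` acting on a bipartite vector. -/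
def applyA {A B : Type*} [Fintype A] (U : Matrix A A ℂ) (ψ : A × B → ℂ) : A × B → ℂ :=
  fun x => ∑ a', U x.1 a' * ψ (a', x.2)

end QBC

open scoped InnerProductSpace

theorem LinearMap.exists_linearIsometry_comp_eq {𝕜 V E : Type*} [RCLike 𝕜] [AddCommGroup V]
    [Module 𝕜 V] [NormedAddCommGroup E] [InnerProductSpace 𝕜 E] [FiniteDimensional 𝕜 E]
    (S T : V →ₗ[𝕜] E) (h : ∀ x, ‖S x‖ = ‖T x‖) :
    ∃ g : E →ₗᵢ[𝕜] E, ∀ x, g (T x) = S x := by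
  have hker : LinearMap.ker T ≤ LinearMap.ker S := fun x hx => by
    rw [LinearMap.mem_ker] at hx ⊢
    rw [← norm_eq_zero, h, hx, norm_zero]
  let f : LinearMap.range T →ₗ[𝕜] E :=
    (LinearMap.ker T).liftQ S hker ∘ₗ T.quotKerEquivRange.symm.toLinearMap
  have hf : ∀ x, f ⟨T x, LinearMap.mem_range_self T x⟩ = S x := fun x => by
    simp [f, LinearMap.quotKerEquivRange_symm_apply_image]
  let L : LinearMap.range T →ₗᵢ[𝕜] E :=
    ⟨f, by rintro ⟨_, x, rfl⟩; rw [hf, h]; rfl⟩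
  exact ⟨L.extend, fun x => (L.extend_apply ⟨T x, _⟩).trans (hf x)⟩

namespace Matrix

variable {𝕜 m n : Type*} [RCLike 𝕜] [Fintype m] [DecidableEq m] [Fintype n] [DecidableEq n]

theorem norm_toEuclideanLin_sq (M : Matrix m n 𝕜) (x : EuclideanSpace 𝕜 n) :
    ‖toEuclideanLin M x‖ ^ 2 = RCLike.re ⟪x, toEuclideanLin (Mᴴ * M) x⟫_𝕜 := by
  rw [@norm_sq_eq_re_inner 𝕜, ← LinearMap.adjoint_inner_right,
    ← toEuclideanLin_conjTranspose_eq_adjoint, toLpLin_mul]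
  rfl

theorem exists_mem_unitaryGroup_mul_eq_of_conjTranspose_mul_self_eq {M N : Matrix m n 𝕜}
    (h : Mᴴ * M = Nᴴ * N) : ∃ U ∈ unitaryGroup m 𝕜, U * N = M := by
  obtain ⟨g, hg⟩ := LinearMap.exists_linearIsometry_comp_eq (toEuclideanLin M) (toEuclideanLin N)
    fun x => by
      rw [← sq_eq_sq₀ (norm_nonneg _) (norm_nonneg _), norm_toEuclideanLin_sq,
        norm_toEuclideanLin_sq, h]
  let b := (EuclideanSpace.basisFun m 𝕜).toBasis
  refine ⟨LinearMap.toMatrix b b g, (g.toLinearIsometryEquiv rfl).toMatrix_mem_unitaryGroup _ _, ?_⟩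
  have hU : toEuclideanLin (LinearMap.toMatrix b b g) = g := by
    rw [toEuclideanLin_eq_toLin_orthonormal, toLin_toMatrix]
  apply toEuclideanLin.injective
  rw [toLpLin_mul 2 2 2, hU]
  exact LinearMap.ext hg

end Matrix

namespace QBC

open scoped Matrix

theorem of_curry_applyA {A B : Type*} [Fintype A] (U : Matrix A A ℂ) (ψ : A × B → ℂ) :
    Matrix.of (Function.curry (applyA U ψ)) = U * Matrix.of (Function.curry ψ) := rfl

section

variable {A B : Type*} [Fintype A] [Fintype B]

theorem ptraceA_proj (ψ : A × B → ℂ) :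
    ptraceA (proj ψ) = ((Matrix.of (Function.curry ψ))ᴴ * Matrix.of (Function.curry ψ))ᵀ := by
  ext i j
  simp [ptraceA, proj, Matrix.mul_apply, mul_comm]

theorem exists_mem_unitaryGroup_applyA_eq_of_ptraceA_proj_eq [DecidableEq A] [DecidableEq B]
    {ψ φ : A × B → ℂ} (h : ptraceA (proj ψ) = ptraceA (proj φ)) :
    ∃ U ∈ Matrix.unitaryGroup A ℂ, applyA U φ = ψ := by
  rw [ptraceA_proj, ptraceA_proj] at h
  obtain ⟨U, hU, hUφ⟩ := Matrix.exists_mem_unitaryGroup_mul_eq_of_conjTranspose_mul_self_eq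
    (Matrix.transpose_injective h)
  refine ⟨U, hU, Function.curry_injective (Matrix.of.injective ?_)⟩
  rw [of_curry_applyA, hUφ]

theorem trace_ptraceA_proj (ψ : A × B → ℂ) : (ptraceA (proj ψ)).trace = ip ψ ψ := by
  rw [ptraceA_proj, Matrix.trace_transpose]
  simp [Matrix.trace, Matrix.mul_apply, ip, Fintype.sum_prod_type, Finset.sum_comm (γ := A)]

theorem isDensity_ptraceA_proj [DecidableEq B] {ψ : A × B → ℂ} (h : ip ψ ψ = 1) :
    IsDensity (ptraceA (proj ψ)) := by
  refine ⟨?_, (trace_ptraceA_proj ψ).trans h⟩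
  rw [ptraceA_proj]
  exact (Matrix.posSemidef_conjTranspose_mul_self _).transpose

end

theorem ip_mulVec_self_of_mem_unitaryGroup {n : Type*} [Fintype n] [DecidableEq n]
    {V : Matrix n n ℂ} (hV : V ∈ Matrix.unitaryGroup n ℂ) (ψ : n → ℂ) :
    ip (V *ᵥ ψ) (V *ᵥ ψ) = ip ψ ψ := by
  change star (V *ᵥ ψ) ⬝ᵥ (V *ᵥ ψ) = star ψ ⬝ᵥ ψ
  rw [Matrix.star_mulVec, ← Matrix.dotProduct_mulVec, Matrix.mulVec_mulVec,
    ← Matrix.star_eq_conjTranspose, Unitary.star_mul_self_of_mem hV, Matrix.one_mulVec]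

section

variable {n : Type*} [Fintype n] [DecidableEq n]

open scoped MatrixOrder

theorem msqrt_eq_sqrt {ρ : Matrix n n ℂ} (h : ρ.PosSemidef) : msqrt ρ = CFC.sqrt ρ := by
  rw [msqrt, dif_pos h, CFC.sqrt_eq_cfc, cfc_nnreal_eq_real _ ρ h.nonneg, h.1.cfc_eq]
  simp only [Matrix.IsHermitian.cfc, Unitary.conjStarAlgAut_apply]
  congr 3
  funext i
  simp [Real.coe_toNNReal', max_eq_left (h.eigenvalues_nonneg i)]

theorem fidelity_self {ρ : Matrix n n ℂ} (h : IsDensity ρ) : fidelity ρ ρ = 1 := by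
  obtain ⟨hpsd, htr⟩ := h
  have hsq : CFC.sqrt ρ * ρ * CFC.sqrt ρ = ρ ^ 2 := by
    have hroot := CFC.sqrt_mul_sqrt_self ρ hpsd.nonneg
    calc CFC.sqrt ρ * ρ * CFC.sqrt ρ = CFC.sqrt ρ * (CFC.sqrt ρ * CFC.sqrt ρ) * CFC.sqrt ρ := by
          rw [hroot]
      _ = CFC.sqrt ρ * CFC.sqrt ρ * (CFC.sqrt ρ * CFC.sqrt ρ) := by simp only [mul_assoc]
      _ = ρ ^ 2 := by rw [hroot, pow_two]
  rw [fidelity, msqrt_eq_sqrt hpsd, hsq, msqrt_eq_sqrt (hpsd.pow 2), CFC.sqrt_sq ρ hpsd.nonneg,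
    htr, Complex.one_re]

end

/-- perfect concealment implies Alice can cheat with certainty,
and her cheating survives any unitary continuation of the opening phase. -/
theorem ideal_no_go
    {A B : Type*} [Fintype A] [DecidableEq A] [Fintype B] [DecidableEq B]
    (Ψ : Bool → A × B → ℂ) (hunit : ∀ b, ip (Ψ b) (Ψ b) = 1)
    (hconc : ptraceA (proj (Ψ false)) = ptraceA (proj (Ψ true))) :
    ∃ U ∈ Matrix.unitaryGroup A ℂ,
      applyA U (Ψ true) = Ψ false ∧
      ∀ V ∈ Matrix.unitaryGroup (A × B) ℂ,
        fidelity (ptraceA (proj (V.mulVec (Ψ false))))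
                 (ptraceA (proj (V.mulVec (applyA U (Ψ true))))) = 1 := by
  obtain ⟨U, hU, hUΨ⟩ := exists_mem_unitaryGroup_applyA_eq_of_ptraceA_proj_eq hconc
  refine ⟨U, hU, hUΨ, fun V hV => ?_⟩
  rw [hUΨ]
  exact fidelity_self <| isDensity_ptraceA_proj <|
    (ip_mulVec_self_of_mem_unitaryGroup hV _).trans (hunit false)

end QBC
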